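/- arXiv:math/9709205 — 5 statements merged into one kernel-verified Lean document; each statement's English description precedes it below -/
import Mathlib

section
/- Under the standing setup, and assuming in addition λ ≥ 2^ℵ₀: there is a function g : S' → ω such that for every club E of λ⁺ there are stationarily many δ ∈ S₁ ∩ S₂ such that e_δ ⊆ E and, for every n < ω, the set E ∩ δ ∩ g⁻¹({n}) is stationary in δ. -/
/-!
Fix, for every `β < θ₁⁺`, an injection `F_β : β → θ₁`, and for every `ρ` of countable cofinality
a ladder `ℓ_ρ : ω → ρ`. A triple `(ξ, ρ, h)` with `ξ < θ₁`, `ρ < θ₁⁺`, `h : ω → ω` colours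
`β < θ₁⁺` by `h` of the position along `ℓ_ρ` of `F_β⁻¹(ξ)`, and some triple splits any given
stationary `W ⊆ θ₁⁺` into `ω` stationary classes: since `θ₁ < cf θ₁⁺`, every `γ` has a `ξ(γ)`
with `{β ∈ W : F_β(γ) = ξ(γ)}` stationary, and some value `ξ` of `ξ(·)` is taken unboundedly
often; an `ω`-sequence of such `γ` with supremum `ρ` meets infinitely many positions of `ℓ_ρ`,
and `h` relabels these positions `0, 1, 2, …`.

For `δ ∈ S₁ ∩ S₂` the club `e_δ` of `δ` has order type `θ₁⁺` and `otp (e_δ ∩ α) = otp e_α` for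
`α ∈ e_δ`, so pulling a splitting colouring `c` back along the collapse of `e_δ` gives a
colouring `α ↦ c (otp e_α)` of `S'` whose classes are all stationary in `δ`. There are only
`θ₁ · θ₁⁺ · 2^ℵ₀ ≤ λ` such colourings; if each one failed for some club, a `δ` guessing the
intersection of these clubs would contradict the choice of the club for the colouring that
works at `δ`.
-/

noncomputable section

/-- The order type of a set of ordinals (meaningful when `C` is small, i.e. bounded). -/
noncomputable def otp (C : Set Ordinal.{0}) : Ordinal.{0} := by
  classical
  exact if h : Small.{0} C then
    letI := h
    haveI : IsWellOrder (Shrink C)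
        (fun x y => ((equivShrink C).symm x : Ordinal) < ((equivShrink C).symm y : Ordinal)) :=
      RelEmbedding.isWellOrder
        (⟨⟨fun x => ((equivShrink C).symm x : Ordinal),
            fun a b hab => (equivShrink C).symm.injective (Subtype.coe_injective hab)⟩,
          Iff.rfl⟩ :
          (fun x y : Shrink C =>
              ((equivShrink C).symm x : Ordinal) < ((equivShrink C).symm y : Ordinal)) ↪r
            ((· < ·) : Ordinal → Ordinal → Prop))
    Ordinal.type
      (fun x y : Shrink C =>
        ((equivShrink C).symm x : Ordinal) < ((equivShrink C).symm y : Ordinal))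
  else 0

/-- `C` is closed in `δ`: any supremum of a nonempty subset of `C` that is `< δ` lies in `C`. -/
def IsClosedIn (C : Set Ordinal.{0}) (δ : Ordinal.{0}) : Prop :=
  ∀ s ⊆ C, s.Nonempty → sSup s < δ → sSup s ∈ C

/-- `C` is a club (closed unbounded) subset of `δ`. -/
def IsClubIn (C : Set Ordinal.{0}) (δ : Ordinal.{0}) : Prop :=
  C ⊆ Set.Iio δ ∧ (∀ β < δ, ∃ γ ∈ C, β ≤ γ) ∧ IsClosedIn C δ

/-- `S` is stationary in `δ`: it meets every club of `δ`. -/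
def IsStationaryIn (S : Set Ordinal.{0}) (δ : Ordinal.{0}) : Prop :=
  ∀ C, IsClubIn C δ → (S ∩ C).Nonempty

/-- The accumulation points of `C` that belong to `C`. -/
def accSet (C : Set Ordinal.{0}) : Set Ordinal.{0} :=
  {β ∈ C | β = sSup (C ∩ Set.Iio β)}

/-- The non-accumulation points of `C`. -/
def naccSet (C : Set Ordinal.{0}) : Set Ordinal.{0} := C \ accSet C

/-- `S_κ^δ`: the set of ordinals below `δ` of cofinality `κ`. -/
def cofSet (κ : Cardinal.{0}) (δ : Ordinal.{0}) : Set Ordinal.{0} :=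
  {α | α < δ ∧ α.cof = κ}

open Set Cardinal Order

namespace Ordinal

theorem isLUB_val_image_iff {δ : Ordinal.{0}} {d : Set (Iio δ)} {a : Iio δ} :
    IsLUB (Subtype.val '' d) a.1 ↔ IsLUB d a := by
  refine ⟨fun h => And.intro (fun x hx => h.1 ⟨x, hx, rfl⟩) fun b hb => h.2 ?_,
    fun h => And.intro ?_ fun y hy => ?_⟩
  · rintro _ ⟨x, hx, rfl⟩
    exact hb hx
  · rintro _ ⟨x, hx, rfl⟩
    exact h.1 hx
  · rcases lt_or_ge y δ with hyδ | hyδ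
    · exact h.2 (show (⟨y, hyδ⟩ : Iio δ) ∈ upperBounds d from fun x hx => hy ⟨x, hx, rfl⟩)
    · exact a.2.le.trans hyδ

theorem cof_Iio_eq_lift_cof (δ : Ordinal.{0}) : Order.cof (Iio δ) = Cardinal.lift.{1} δ.cof :=
  (cof_Iio δ).trans (lift_cof δ).symm

theorem isSuccLimit_of_aleph0_lt_cof {δ : Ordinal.{0}} (hδ : ℵ₀ < δ.cof) : IsSuccLimit δ :=
  one_lt_cof_iff.1 (one_lt_aleph0.trans hδ)

end Ordinal

variable {C D S X Y : Set Ordinal.{0}} {δ : Ordinal.{0}}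

theorem isClubIn_iff_isClub (hC : C ⊆ Iio δ) :
    IsClubIn C δ ↔ IsClub (Subtype.val ⁻¹' C : Set (Iio δ)) := by
  have hcof : (∀ β < δ, ∃ γ ∈ C, β ≤ γ) ↔ IsCofinal (Subtype.val ⁻¹' C : Set (Iio δ)) :=
    ⟨fun h β => let ⟨γ, hγ, hβγ⟩ := h β β.2; ⟨⟨γ, hC hγ⟩, hγ, hβγ⟩,
      fun h β hβ => let ⟨γ, hγ, hβγ⟩ := h ⟨β, hβ⟩; ⟨γ, hγ, hβγ⟩⟩
  have hclosed : IsClosedIn C δ ↔ DirSupClosed (Subtype.val ⁻¹' C : Set (Iio δ)) := by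
    rw [dirSupClosed_iff_of_linearOrder]
    refine ⟨fun h d hd hne a ha => ?_, fun h s hs hne hlt => ?_⟩
    · have hsup := (Ordinal.isLUB_val_image_iff.2 ha).csSup_eq (hne.image _)
      have := h _ (image_subset_iff.2 hd) (hne.image _) (hsup ▸ a.2)
      rwa [hsup] at this
    · have hs' : Subtype.val '' (Subtype.val ⁻¹' s : Set (Iio δ)) = s :=
        image_preimage_eq_of_subset fun x hx => ⟨⟨x, hC (hs hx)⟩, rfl⟩
      refine h (d := Subtype.val ⁻¹' s) (a := ⟨sSup s, hlt⟩) (fun x hx => hs hx) ?_ ?_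
      · obtain ⟨x, hx⟩ := hne
        exact ⟨⟨x, hC (hs hx)⟩, hx⟩
      · rw [← Ordinal.isLUB_val_image_iff, hs']
        exact isLUB_csSup hne ⟨δ, fun x hx => (hC (hs hx)).le⟩
  rw [IsClubIn, isClub_iff, hcof, hclosed]
  exact ⟨fun h => ⟨h.2.2, h.2.1⟩, fun h => ⟨hC, h.2, h.1⟩⟩

theorem isStationaryIn_iff_isStationary :
    IsStationaryIn S δ ↔ IsStationary (Subtype.val ⁻¹' S : Set (Iio δ)) := by
  refine ⟨fun h D hD => ?_, fun h C hC => ?_⟩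
  · have hD' : IsClubIn (Subtype.val '' D) δ := by
      rw [isClubIn_iff_isClub (by rintro _ ⟨x, -, rfl⟩; exact x.2),
        preimage_image_eq _ Subtype.val_injective]
      exact hD
    obtain ⟨_, hS, x, hx, rfl⟩ := h _ hD'
    exact ⟨x, hS, hx⟩
  · obtain ⟨x, hS, hC'⟩ := h ((isClubIn_iff_isClub hC.1).1 hC)
    exact ⟨x, hS, hC'⟩

theorem IsStationaryIn.mono (hX : IsStationaryIn X δ) (h : X ⊆ Y) : IsStationaryIn Y δ :=
  fun C hC => (hX C hC).mono (inter_subset_inter_left C h)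

theorem not_isStationaryIn_iff : ¬ IsStationaryIn S δ ↔ ∃ C, IsClubIn C δ ∧ Disjoint S C := by
  simp [IsStationaryIn, disjoint_iff, not_nonempty_iff_eq_empty]

theorem IsClubIn.iInter {ι : Type} {D : ι → Set Ordinal.{0}} (hδ : δ.cof ≠ ℵ₀)
    (hι : #ι < δ.cof) (hD : ∀ i, IsClubIn (D i) δ) : IsClubIn (Iio δ ∩ ⋂ i, D i) δ := by
  rw [isClubIn_iff_isClub inter_subset_left, preimage_inter, preimage_iInter,
    Subtype.coe_preimage_self, univ_inter]
  refine IsClub.iInter ?_ ?_ fun i => (isClubIn_iff_isClub (hD i).1).1 (hD i)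
  · rwa [Ordinal.cof_Iio_eq_lift_cof, Ne, Cardinal.lift_eq_aleph0]
  · rwa [Ordinal.cof_Iio_eq_lift_cof, Cardinal.lift_lift, Cardinal.lift_lt]

theorem IsClubIn.inter (hδ : δ.cof ≠ ℵ₀) (hC : IsClubIn C δ) (hD : IsClubIn D δ) :
    IsClubIn (C ∩ D) δ := by
  rw [isClubIn_iff_isClub (inter_subset_left.trans hC.1), preimage_inter]
  refine IsClub.inter ?_ ((isClubIn_iff_isClub hC.1).1 hC) ((isClubIn_iff_isClub hD.1).1 hD)
  rwa [Ordinal.cof_Iio_eq_lift_cof, Ne, Cardinal.lift_eq_aleph0]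

theorem IsStationaryIn.inter_isClubIn (hS : IsStationaryIn S δ) (hδ : δ.cof ≠ ℵ₀)
    (hC : IsClubIn C δ) : IsStationaryIn (S ∩ C) δ := fun _ hD =>
  let ⟨x, hxS, hxC, hxD⟩ := hS _ (hC.inter hδ hD)
  ⟨x, ⟨hxS, hxC⟩, hxD⟩

theorem isStationaryIn_iUnion_iff {ι : Type} {A : ι → Set Ordinal.{0}} (hδ : δ.cof ≠ ℵ₀)
    (hι : #ι < δ.cof) : IsStationaryIn (⋃ i, A i) δ ↔ ∃ i, IsStationaryIn (A i) δ := by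
  simp_rw [isStationaryIn_iff_isStationary, preimage_iUnion]
  refine isStationary_iUnion_iff ?_ ?_
  · rwa [Ordinal.cof_Iio_eq_lift_cof, Ne, Cardinal.lift_eq_aleph0]
  · rwa [Ordinal.cof_Iio_eq_lift_cof, Cardinal.lift_lift, Cardinal.lift_lt]

theorem isClubIn_Iio : IsClubIn (Iio δ) δ :=
  ⟨subset_rfl, fun β hβ => ⟨β, hβ, le_rfl⟩, fun _ _ _ h => h⟩

theorem isClubIn_Ioo {γ : Ordinal.{0}} (hδ : IsSuccLimit δ) (hγ : γ < δ) :
    IsClubIn (Ioo γ δ) δ := by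
  refine ⟨fun x hx => hx.2, fun β hβ => ⟨max (succ γ) β, ⟨?_, ?_⟩, le_max_right _ _⟩, ?_⟩
  · exact (lt_succ γ).trans_le (le_max_left _ _)
  · exact max_lt (hδ.succ_lt hγ) hβ
  · rintro s hs ⟨x, hx⟩ hlt
    exact ⟨(hs hx).1.trans_le (le_csSup ⟨δ, fun y hy => (hs hy).2.le⟩ hx), hlt⟩

theorem isStationaryIn_Iio (hδ : 0 < δ) : IsStationaryIn (Iio δ) δ := fun _ hC =>
  let ⟨γ, hγ, _⟩ := hC.2.1 0 hδ
  ⟨γ, hC.1 hγ, hγ⟩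

theorem IsStationaryIn.inter_Ioo (hS : IsStationaryIn S δ) (hδ : ℵ₀ < δ.cof) {γ : Ordinal.{0}}
    (hγ : γ < δ) : IsStationaryIn (S ∩ Ioo γ δ) δ := fun _ hC =>
  let ⟨x, hxS, hxC, hx⟩ := hS _ (hC.inter hδ.ne' (isClubIn_Ioo
    (Ordinal.isSuccLimit_of_aleph0_lt_cof hδ) hγ))
  ⟨x, ⟨hxS, hx⟩, hxC⟩

theorem IsStationaryIn.exists_gt (hS : IsStationaryIn S δ) (hδ : ℵ₀ < δ.cof) {γ : Ordinal.{0}}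
    (hγ : γ < δ) : ∃ β ∈ S, γ < β ∧ β < δ :=
  let ⟨β, ⟨hβS, hβ⟩, _⟩ := hS.inter_Ioo hδ hγ _ isClubIn_Iio
  ⟨β, hβS, hβ⟩

theorem isClubIn_of_sSup_eq (hsub : C ⊆ Iio δ) (hclosed : IsClosedIn C δ) (hsup : sSup C = δ) :
    IsClubIn C δ :=
  ⟨hsub, fun _ hβ => let ⟨γ, hγ, hβγ⟩ := exists_lt_of_lt_csSup' (hsup ▸ hβ); ⟨γ, hγ, hβγ.le⟩,
    hclosed⟩

theorem IsClubIn.sSup_eq (hC : IsClubIn C δ) (hδ : IsSuccLimit δ) : sSup C = δ := by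
  refine le_antisymm (csSup_le' fun x hx => (hC.1 hx).le) (le_of_forall_lt fun β hβ => ?_)
  obtain ⟨γ, hγ, hβγ⟩ := hC.2.1 (succ β) (hδ.succ_lt hβ)
  exact (lt_succ β).trans_le (hβγ.trans (le_csSup ⟨δ, fun x hx => (hC.1 hx).le⟩ hγ))

theorem IsClubIn.mem_of_subset {μ : Ordinal.{0}} (hD : IsClubIn D μ) (hC : IsClubIn C δ)
    (hδ : IsSuccLimit δ) (hδμ : δ < μ) (hCD : C ⊆ D) : δ ∈ D := by
  have hsup := hC.sSup_eq hδ
  obtain ⟨γ, hγ, -⟩ := hC.2.1 0 hδ.bot_lt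
  exact hsup ▸ hD.2.2 C hCD ⟨γ, hγ⟩ (hsup ▸ hδμ)

section Collapse

variable {f : Ordinal.{0} → Ordinal.{0}} {o : Ordinal.{0}}

theorem StrictMonoOn.map_sSup_of_image_eq_Iio (hf : StrictMonoOn f C) (himg : f '' C = Iio o)
    {s : Set Ordinal.{0}} (hsC : s ⊆ C) (hne : s.Nonempty) (hbdd : BddAbove s)
    (hsup : sSup s ∈ C) : f (sSup s) = sSup (f '' s) := by
  have hfs : BddAbove (f '' s) := ⟨o, by
    rintro _ ⟨x, hx, rfl⟩
    exact (himg ▸ mem_image_of_mem f (hsC hx) : f x ∈ Iio o).le⟩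
  refine le_antisymm (le_of_forall_lt fun c hc => ?_) (csSup_le (hne.image f) ?_)
  · have hco : c ∈ f '' C := himg ▸ hc.trans (himg ▸ mem_image_of_mem f hsup : _ ∈ Iio o)
    obtain ⟨x, hxC, rfl⟩ := hco
    obtain ⟨w, hws, hxw⟩ := exists_lt_of_lt_csSup hne ((hf.lt_iff_lt hxC hsup).1 hc)
    exact (hf hxC (hsC hws) hxw).trans_le (le_csSup hfs (mem_image_of_mem f hws))
  · rintro _ ⟨w, hws, rfl⟩
    exact (hf.le_iff_le (hsC hws) hsup).2 (le_csSup hbdd hws)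

theorem IsClubIn.inter_preimage (hC : IsClubIn C δ) (hf : StrictMonoOn f C)
    (himg : f '' C = Iio o) (hD : IsClubIn D o) : IsClubIn (C ∩ f ⁻¹' D) δ := by
  refine ⟨inter_subset_left.trans hC.1, fun β hβ => ?_, fun s hs hne hlt => ?_⟩
  · obtain ⟨γ, hγC, hβγ⟩ := hC.2.1 β hβ
    obtain ⟨η, hηD, hγη⟩ := hD.2.1 (f γ) ((himg ▸ mapsTo_image f C : MapsTo f C (Iio o)) hγC)
    obtain ⟨x, hxC, rfl⟩ : η ∈ f '' C := himg ▸ hD.1 hηD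
    exact ⟨x, ⟨hxC, hηD⟩, hβγ.trans ((hf.le_iff_le hγC hxC).1 hγη)⟩
  · have hsC : s ⊆ C := fun x hx => (hs hx).1
    have hsup : sSup s ∈ C := hC.2.2 s hsC hne hlt
    have hcont := hf.map_sSup_of_image_eq_Iio himg hsC hne
      ⟨δ, fun x hx => (hC.1 (hsC hx)).le⟩ hsup
    refine ⟨hsup, ?_⟩
    rw [mem_preimage, hcont]
    refine hD.2.2 _ (image_subset_iff.2 fun x hx => (hs hx).2) (hne.image f) ?_
    exact hcont ▸ (himg ▸ mem_image_of_mem f hsup : _ ∈ Iio o)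

theorem IsClubIn.image (hC : IsClubIn C δ) (hf : StrictMonoOn f C) (himg : f '' C = Iio o)
    (hD : IsClubIn D δ) (hDC : D ⊆ C) : IsClubIn (f '' D) o := by
  refine ⟨himg ▸ image_mono hDC, fun η hη => ?_, fun s hs hne hlt => ?_⟩
  · obtain ⟨x, hxC, rfl⟩ : η ∈ f '' C := himg ▸ hη
    obtain ⟨γ, hγD, hxγ⟩ := hD.2.1 x (hC.1 hxC)
    exact ⟨f γ, mem_image_of_mem f hγD, (hf.le_iff_le hxC (hDC hγD)).2 hxγ⟩
  · obtain ⟨x, hxC, hx⟩ : sSup s ∈ f '' C := himg ▸ hlt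
    set s₀ := D ∩ f ⁻¹' s
    have hs₀ : f '' s₀ = s := (image_inter_preimage f D s).trans (inter_eq_right.2 hs)
    have hs₀ne : s₀.Nonempty := image_nonempty.1 (hs₀.symm ▸ hne)
    have hs₀x : ∀ y ∈ s₀, y ≤ x := fun y hy => (hf.le_iff_le (hDC hy.1) hxC).1
      (hx ▸ le_csSup ⟨o, fun z hz => (himg ▸ image_mono hDC (hs hz) : z ∈ Iio o).le⟩ hy.2)
    have hsup : sSup s₀ ∈ D :=
      hD.2.2 s₀ inter_subset_left hs₀ne ((csSup_le hs₀ne hs₀x).trans_lt (hC.1 hxC))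
    refine ⟨sSup s₀, hsup, ?_⟩
    rw [hf.map_sSup_of_image_eq_Iio himg (inter_subset_left.trans hDC) hs₀ne ⟨x, hs₀x⟩
      (hDC hsup), hs₀]

theorem IsStationaryIn.image_of_strictMonoOn (hX : IsStationaryIn X δ)
    (hC : IsClubIn C δ) (hf : StrictMonoOn f C) (himg : f '' C = Iio o) :
    IsStationaryIn (f '' X) o := fun _ hD =>
  let ⟨x, hxX, _, hxD⟩ := hX _ (hC.inter_preimage hf himg hD)
  ⟨f x, mem_image_of_mem f hxX, hxD⟩

theorem IsStationaryIn.inter_preimage_of_strictMonoOn (hY : IsStationaryIn Y o)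
    (hδ : δ.cof ≠ ℵ₀) (hC : IsClubIn C δ) (hf : StrictMonoOn f C) (himg : f '' C = Iio o) :
    IsStationaryIn (C ∩ f ⁻¹' Y) δ := fun _ hD =>
  let ⟨_, hyY, x, hx, hxy⟩ := hY _ (hC.image hf himg (hD.inter hδ hC) inter_subset_right)
  ⟨x, ⟨hx.2, show f x ∈ Y from hxy ▸ hyY⟩, hx.1⟩

end Collapse

def otpBelow (C : Set Ordinal.{0}) (α : Ordinal.{0}) : Ordinal.{0} := otp (C ∩ Iio α)

section OrderType

variable {x : Ordinal.{0}}

theorem lift_otp (C : Set Ordinal.{0}) [h : Small.{0} C] :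
    Ordinal.lift.{1} (otp C) = Ordinal.type ((· < ·) : C → C → Prop) := by
  rw [otp, dif_pos h]
  exact (Ordinal.type_lift_preimage (α := C) (· < ·) (equivShrink C).symm).trans
    (Ordinal.lift_uzero _)

theorem lift_otpBelow [Small.{0} C] (hx : x ∈ C) :
    Ordinal.lift.{1} (otpBelow C x) = Ordinal.typein ((· < ·) : C → C → Prop) ⟨x, hx⟩ := by
  have : Small.{0} ↥(C ∩ Iio x) := small_subset inter_subset_left
  rw [otpBelow, lift_otp, ← Ordinal.type_Iio_lt]
  let e : Iio (⟨x, hx⟩ : C) ≃o ↥(C ∩ Iio x) :=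
    ⟨Equiv.subtypeSubtypeEquivSubtypeInter (· ∈ C) (· < x), Iff.rfl⟩
  exact e.toRelIsoLT.ordinalType_congr.symm

theorem strictMonoOn_otpBelow [Small.{0} C] : StrictMonoOn (otpBelow C) C :=
  fun x hx y hy hxy => Ordinal.lift_lt.{1}.1 <| by
    rw [lift_otpBelow hx, lift_otpBelow hy]
    exact (Ordinal.typein_lt_typein _).2 hxy

theorem otpBelow_image [Small.{0} C] : otpBelow C '' C = Iio (otp C) := by
  ext β
  refine ⟨?_, fun hβ => ?_⟩
  · rintro ⟨x, hx, rfl⟩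
    rw [mem_Iio, ← Ordinal.lift_lt.{1}, lift_otpBelow hx, lift_otp]
    exact Ordinal.typein_lt_type _ _
  · rw [mem_Iio, ← Ordinal.lift_lt.{1}, lift_otp] at hβ
    obtain ⟨⟨x, hx⟩, h⟩ := Ordinal.typein_surj _ hβ
    exact ⟨x, hx, Ordinal.lift_inj.{1}.1 ((lift_otpBelow hx).trans h)⟩

end OrderType

theorem IsClubIn.small (hC : IsClubIn C δ) : Small.{0} C := small_subset hC.1

theorem IsClubIn.cof_le_card_otp (hC : IsClubIn C δ) : δ.cof ≤ (otp C).card := by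
  have := hC.small
  have hcof : Order.cof (Iio δ) ≤ #(Subtype.val ⁻¹' C : Set (Iio δ)) :=
    Order.cof_le ((isClubIn_iff_isClub hC.1).1 hC).isCofinal
  rw [Ordinal.cof_Iio_eq_lift_cof, Cardinal.mk_preimage_of_injective_of_subset_range _ _
    Subtype.val_injective (Subtype.range_coe.symm ▸ hC.1), ← Ordinal.card_type (α := C) (· < ·),
    ← lift_otp, ← Ordinal.lift_card, Cardinal.lift_le] at hcof
  exact hcof

theorem IsClubIn.otp_eq_ord_succ {c : Cardinal.{0}} (hC : IsClubIn C δ) (hcof : δ.cof = succ c)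
    (hle : otp C ≤ (succ c).ord) : otp C = (succ c).ord := by
  refine hle.antisymm (le_of_not_gt fun hlt => ?_)
  have := hC.cof_le_card_otp.trans_lt (Cardinal.lt_ord.1 hlt)
  rw [hcof, Order.lt_succ_iff] at this
  exact (Order.lt_succ c).not_ge this

def IsLadder (ℓ : ℕ → Ordinal.{0}) (ρ : Ordinal.{0}) : Prop :=
  (∀ k, ℓ k < ρ) ∧ ∀ x < ρ, ∃ k, x ≤ ℓ k

/-- Meaningful only for `x` below the limit of the ladder: `sInf ∅ = 0`. -/
def ladderRank (ℓ : ℕ → Ordinal.{0}) (x : Ordinal.{0}) : ℕ := sInf {k | x ≤ ℓ k}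

theorem IsLadder.infinite_image_ladderRank {ℓ : ℕ → Ordinal.{0}} {ρ : Ordinal.{0}}
    (hℓ : IsLadder ℓ ρ) {A : Set Ordinal.{0}} (hAρ : A ⊆ Iio ρ) (hA : ∀ x < ρ, ∃ a ∈ A, x < a) :
    (ladderRank ℓ '' A).Infinite := by
  intro hfin
  obtain ⟨K, hK⟩ := hfin.bddAbove
  set M := (Finset.range (K + 1)).sup' Finset.nonempty_range_add_one ℓ
  obtain ⟨a, haA, hMa⟩ := hA M ((Finset.sup'_lt_iff _).2 fun k _ => hℓ.1 k)
  have hrank : a ≤ ℓ (ladderRank ℓ a) := Nat.sInf_mem (hℓ.2 a (hAρ haA))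
  have hle : ladderRank ℓ a ≤ K := hK (mem_image_of_mem _ haA)
  exact (hrank.trans (Finset.le_sup' ℓ (Finset.mem_range_succ_iff.2 hle))).not_gt hMa

theorem exists_isLadder_of_unbounded {κ : Ordinal.{0}} (hκ : ℵ₀ < κ.cof) {Γ : Set Ordinal.{0}}
    (hΓ : ∀ β < κ, ∃ γ ∈ Γ, β < γ ∧ γ < κ) :
    ∃ ρ < κ, (∃ ℓ, IsLadder ℓ ρ) ∧ ∀ x < ρ, ∃ γ ∈ Γ ∩ Iio ρ, x < γ := by
  choose! next hnextΓ hnext hnextκ using hΓ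
  have hκ0 : 0 < κ := Ordinal.cof_pos.1 (aleph0_pos.trans hκ)
  let ℓ : ℕ → Ordinal.{0} := fun n => Nat.rec (next 0) (fun _ x => next x) n
  have hℓκ : ∀ n, ℓ n < κ := fun n => by
    induction n with
    | zero => exact hnextκ 0 hκ0
    | succ n ih => exact hnextκ (ℓ n) ih
  have hℓ : StrictMono ℓ := strictMono_nat_of_lt_succ fun n => hnext (ℓ n) (hℓκ n)
  have hℓΓ : ∀ n, ℓ n ∈ Γ := fun n => by
    cases n with
    | zero => exact hnextΓ 0 hκ0
    | succ n => exact hnextΓ (ℓ n) (hℓκ n)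
  set ρ := ⨆ n, ℓ n
  have hltρ : ∀ n, ℓ n < ρ := fun n =>
    (hℓ (Nat.lt_succ_self n)).trans_le (Ordinal.le_iSup ℓ (n + 1))
  refine ⟨ρ, Ordinal.iSup_lt_of_lt_cof (by rwa [Cardinal.mk_nat]) hℓκ,
    ⟨ℓ, hltρ, fun x hx => ?_⟩, fun x hx => ?_⟩
  · obtain ⟨k, hk⟩ := Ordinal.lt_iSup_iff.1 hx
    exact ⟨k, hk.le⟩
  · obtain ⟨k, hk⟩ := Ordinal.lt_iSup_iff.1 hx
    exact ⟨ℓ k, ⟨hℓΓ k, hltρ k⟩, hk⟩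

theorem exists_injOn_Iio {ι : Type} [Nonempty ι] {β : Ordinal.{0}} (h : β.card ≤ #ι) :
    ∃ f : Ordinal.{0} → ι, InjOn f (Iio β) := by
  obtain ⟨g⟩ := Cardinal.lift_mk_le'.{1, 0}.1 (by
    rw [Cardinal.mk_Iio_ordinal, Cardinal.lift_uzero]
    exact Cardinal.lift_le.2 h)
  refine ⟨Function.extend Subtype.val g fun _ => Classical.arbitrary ι, fun x hx y hy hxy => ?_⟩
  rw [Subtype.val_injective.extend_apply g _ ⟨x, hx⟩,
    Subtype.val_injective.extend_apply g _ ⟨y, hy⟩] at hxy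
  exact congrArg Subtype.val (g.injective hxy)

def SplitsStationary {T : Type} (c : T → Ordinal.{0} → ℕ) (κ : Ordinal.{0}) : Prop :=
  ∀ W, IsStationaryIn W κ → ∃ t, ∀ n, IsStationaryIn {β ∈ W | c t β = n} κ

/-- The colouring of index `(ξ, ρ, h)`: for `β < κ`, take the `γ < β` sent to `ξ` by the chosen
injection `β ↪ ι` (a column of an Ulam matrix), and colour `β` by `h` of the position of `γ`
along the chosen ladder of `ρ`. -/
def ulamColouring (ι : Type) [Nonempty ι] (κ : Ordinal.{0}) (t : ι × κ.ToType × (ℕ → ℕ))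
    (β : Ordinal.{0}) : ℕ :=
  let F := Classical.epsilon fun f : Ordinal.{0} → ι => InjOn f (Iio β)
  let ℓ := Classical.epsilon fun ℓ => IsLadder ℓ (Ordinal.ToType.mk.symm t.2.1)
  t.2.2 (ladderRank ℓ (Function.invFunOn F (Iio β) t.1))

theorem splitsStationary_ulamColouring {κ : Ordinal.{0}} (hκ : ℵ₀ < κ.cof) {ι : Type}
    [Nonempty ι] (hι : #ι < κ.cof) (hcard : ∀ β < κ, β.card ≤ #ι) :
    SplitsStationary (ulamColouring ι κ) κ := by
  classical
  intro W hW
  set F : Ordinal.{0} → Ordinal.{0} → ι := fun β =>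
    Classical.epsilon fun f : Ordinal.{0} → ι => InjOn f (Iio β)
  have hF : ∀ β < κ, InjOn (F β) (Iio β) := fun β hβ =>
    Classical.epsilon_spec (exists_injOn_Iio (hcard β hβ))
  have hfibre : ∀ γ < κ, ∃ ξ, IsStationaryIn {β ∈ W ∩ Ioo γ κ | F β γ = ξ} κ := fun γ hγ =>
    (isStationaryIn_iUnion_iff hκ.ne' hι).1 <|
      (hW.inter_Ioo hκ hγ).mono fun β hβ => mem_iUnion.2 ⟨F β γ, hβ, rfl⟩
  choose! ξ hξ using hfibre
  obtain ⟨ξ₀, hξ₀⟩ : ∃ ξ₀, IsStationaryIn {γ ∈ Iio κ | ξ γ = ξ₀} κ :=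
    (isStationaryIn_iUnion_iff hκ.ne' hι).1 <|
      (isStationaryIn_Iio (Ordinal.cof_pos.1 (aleph0_pos.trans hκ))).mono
        fun γ hγ => mem_iUnion.2 ⟨ξ γ, hγ, rfl⟩
  obtain ⟨ρ, hρκ, hρ, hcofinal⟩ :=
    exists_isLadder_of_unbounded hκ fun β hβ => hξ₀.exists_gt hκ hβ
  set ℓ := Classical.epsilon fun ℓ => IsLadder ℓ ρ
  set V := ladderRank ℓ '' ({γ ∈ Iio κ | ξ γ = ξ₀} ∩ Iio ρ)
  have hV : V.Infinite :=
    (Classical.epsilon_spec hρ).infinite_image_ladderRank inter_subset_right hcofinal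
  -- `Nat.count (· ∈ V)` sends the `n`-th element of `V` to `n`.
  refine ⟨(ξ₀, Ordinal.ToType.mk ⟨ρ, hρκ⟩, Nat.count (· ∈ V)), fun n => ?_⟩
  obtain ⟨γ, ⟨⟨hγκ, hγξ⟩, -⟩, hγn⟩ := Nat.nth_mem_of_infinite hV n
  refine (hξ γ hγκ).mono fun β ⟨⟨hβW, hγβ, hβκ⟩, hβξ⟩ => ⟨hβW, ?_⟩
  have hinv : Function.invFunOn (F β) (Iio β) ξ₀ = γ :=
    hγξ ▸ hβξ ▸ (hF β hβκ).leftInvOn_invFunOn hγβ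
  simp only [ulamColouring, OrderIso.symm_apply_apply]
  rw [hinv, hγn]
  exact Nat.count_nth_of_infinite hV n

theorem splitsStationary_ulamColouring_succ {θ₁ : Cardinal.{0}} (hθ₁ : ℵ₀ ≤ θ₁)
    [Nonempty θ₁.out] : SplitsStationary (ulamColouring θ₁.out (succ θ₁).ord) (succ θ₁).ord := by
  have hκ : (succ θ₁).ord.cof = succ θ₁ := (isRegular_succ hθ₁).cof_ord
  refine splitsStationary_ulamColouring (by rw [hκ]; exact hθ₁.trans_lt (lt_succ θ₁))
    (by rw [hκ, mk_out]; exact lt_succ θ₁) fun β hβ => ?_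
  rw [mk_out]
  exact le_of_lt_succ (lt_ord.1 hβ)

theorem SplitsStationary.exists_forall_isStationaryIn_otpBelow {T : Type}
    {c : T → Ordinal.{0} → ℕ} (hc : SplitsStationary c (otp C)) (hδ : δ.cof ≠ ℵ₀)
    (hC : IsClubIn C δ) (hX : IsStationaryIn X δ) :
    ∃ t, ∀ n, IsStationaryIn {α ∈ X ∩ C | c t (otpBelow C α) = n} δ := by
  have := hC.small
  obtain ⟨t, ht⟩ := hc _ ((hX.inter_isClubIn hδ hC).image_of_strictMonoOn hC
    strictMonoOn_otpBelow otpBelow_image)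
  refine ⟨t, fun n => ((ht n).inter_preimage_of_strictMonoOn hδ hC strictMonoOn_otpBelow
    otpBelow_image).mono ?_⟩
  rintro α ⟨hαC, ⟨x, hxXC, hxα⟩, hn⟩
  obtain rfl : x = α := strictMonoOn_otpBelow.injOn hxXC.2 hαC hxα
  exact ⟨hxXC, hn⟩

/-- If each of fewer than `cf μ` candidates `t` were defeated by some club, the intersection of
these clubs would be a club, and a `δ` whose `e δ` it guesses would not defeat the candidate that
works at `δ`. -/
theorem exists_forall_isStationaryIn_of_guessing {μ : Ordinal.{0}} (hμ : μ.cof ≠ ℵ₀) {T : Type}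
    (hT : #T < μ.cof) {G : Set Ordinal.{0}} {e : Ordinal.{0} → Set Ordinal.{0}}
    (hguess : ∀ E, IsClubIn E μ → IsStationaryIn {δ | δ ∈ G ∧ e δ ⊆ E} μ)
    (he : ∀ δ ∈ G, IsSuccLimit δ ∧ IsClubIn (e δ) δ)
    {Q : T → Ordinal.{0} → Set Ordinal.{0} → Prop} (hQ : ∀ t δ, Monotone (Q t δ))
    (hlocal : ∀ δ ∈ G, ∃ t, Q t δ (e δ)) :
    ∃ t, ∀ E, IsClubIn E μ → IsStationaryIn {δ | δ ∈ G ∧ e δ ⊆ E ∧ Q t δ E} μ := by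
  by_contra! hbad
  choose E hE hEbad using hbad
  choose F hF hFdisj using fun t => not_isStationaryIn_iff.1 (hEbad t)
  obtain ⟨δ, ⟨hδG, heδ⟩, hδμ⟩ :=
    hguess _ (IsClubIn.iInter hμ hT fun t => (hE t).inter hμ (hF t)) _ isClubIn_Iio
  obtain ⟨t, ht⟩ := hlocal δ hδG
  have heδE : e δ ⊆ E t := fun x hx => (mem_iInter.1 (heδ hx).2 t).1
  have hδF : δ ∈ F t := (hF t).mem_of_subset (he δ hδG).2 (he δ hδG).1 hδμ
    fun x hx => (mem_iInter.1 (heδ hx).2 t).2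
  exact disjoint_left.1 (hFdisj t) ⟨hδG, heδE, hQ t δ heδE ht⟩ hδF

theorem SplitsStationary.exists_forall_isStationaryIn_of_coherent {T : Type}
    {c : T → Ordinal.{0} → ℕ} {S S₂ : Set Ordinal.{0}} {e : Ordinal.{0} → Set Ordinal.{0}}
    (hc : SplitsStationary c (otp (e δ))) (hδ : δ.cof ≠ ℵ₀) (he : IsClubIn (e δ) δ)
    (hS : IsStationaryIn (S ∩ Iio δ) δ) (hcoh : ∀ α ∈ e δ, α ∈ S₂ ∧ e α = e δ ∩ Iio α) :
    ∃ t, ∀ n, IsStationaryIn (e δ ∩ Iio δ ∩ {α | α ∈ S ∩ S₂ ∧ c t (otp (e α)) = n}) δ := by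
  obtain ⟨t, ht⟩ := hc.exists_forall_isStationaryIn_otpBelow hδ he hS
  refine ⟨t, fun n => (ht n).mono ?_⟩
  rintro α ⟨⟨⟨hαS, -⟩, hαe⟩, hcol⟩
  obtain ⟨hαS₂, heα⟩ := hcoh α hαe
  exact ⟨⟨hαe, he.1 hαe⟩, ⟨hαS, hαS₂⟩, heα ▸ hcol⟩

theorem mk_ulamIndex_lt_succ {θ₁ lam : Cardinal.{0}} (hθ₁ : ℵ₀ ≤ θ₁) (hlam : succ θ₁ ≤ lam)
    (hcont : 2 ^ ℵ₀ ≤ lam) : #(θ₁.out × (succ θ₁).ord.ToType × (ℕ → ℕ)) < succ lam := by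
  have hlam₀ : ℵ₀ ≤ succ lam := hθ₁.trans ((le_succ θ₁).trans (hlam.trans (le_succ lam)))
  have hnat : #(ℕ → ℕ) = 2 ^ ℵ₀ := by
    rw [← Cardinal.power_def, Cardinal.mk_nat, Cardinal.power_self_eq le_rfl]
  simp only [Cardinal.mk_prod, Cardinal.mk_out, Cardinal.mk_toType, Cardinal.card_ord, hnat,
    Cardinal.lift_id]
  exact Cardinal.mul_lt_of_lt hlam₀ (((le_succ θ₁).trans hlam).trans_lt (lt_succ lam)) <|
    Cardinal.mul_lt_of_lt hlam₀ (hlam.trans_lt (lt_succ lam)) (hcont.trans_lt (lt_succ lam))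

theorem stmt_2_general
    (lam θ₁ θ : Cardinal.{0})
    (hlamθ₁ : Order.succ θ₁ < lam) (hθ₁θ : θ ≤ θ₁)
    (hθ : Cardinal.aleph 1 < θ)
    (Sstar S₁ S₂ S' : Set Ordinal) (e : Ordinal → Set Ordinal)
    (hS₁def : S₁ = {δ | δ < (Order.succ lam).ord ∧ δ.cof = Order.succ θ₁ ∧
      IsStationaryIn (Sstar ∩ Set.Iio δ) δ})
    (he_closed : ∀ δ ∈ S₂, e δ ⊆ Set.Iio δ ∧ IsClosedIn (e δ) δ ∧
      otp (e δ) ≤ (Order.succ θ₁).ord)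
    (he_coh : ∀ δ ∈ S₂, ∀ β ∈ e δ, β ∈ S₂ ∧ e β = e δ ∩ Set.Iio β)
    (he_sup : ∀ δ ∈ S₂, δ.cof ≠ Cardinal.aleph 1 → sSup (e δ) = δ)
    (hguess : ∀ E, IsClubIn E (Order.succ lam).ord →
      IsStationaryIn {δ | δ ∈ S₁ ∩ S₂ ∧ e δ ⊆ E} (Order.succ lam).ord)
    (hS'def : S' = Sstar ∩ S₂)
    (hcont : 2 ^ Cardinal.aleph0 ≤ lam) :
    ∃ g : Ordinal → ℕ, ∀ E, IsClubIn E (Order.succ lam).ord →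
      IsStationaryIn {δ | δ ∈ S₁ ∩ S₂ ∧ e δ ⊆ E ∧
        ∀ n : ℕ, IsStationaryIn (E ∩ Set.Iio δ ∩ {α | α ∈ S' ∧ g α = n}) δ}
        (Order.succ lam).ord := by
  subst hS'def
  have hθ₁ : ℵ₀ < θ₁ := (aleph0_lt_aleph_one.trans hθ).trans_le hθ₁θ
  have hθ₁' : ℵ₀ < succ θ₁ := hθ₁.trans (lt_succ θ₁)
  have hlam : ℵ₀ ≤ lam := hθ₁.le.trans ((le_succ θ₁).trans hlamθ₁.le)
  have hμ : (succ lam).ord.cof = succ lam := (isRegular_succ hlam).cof_ord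
  have hG : ∀ δ ∈ S₁ ∩ S₂, δ.cof = succ θ₁ ∧ IsStationaryIn (Sstar ∩ Iio δ) δ ∧
      IsClubIn (e δ) δ := fun δ ⟨hδ₁, hδ₂⟩ => by
    rw [hS₁def] at hδ₁
    have hsup := he_sup δ hδ₂ (hδ₁.2.1 ▸ ((hθ.trans_le hθ₁θ).trans (lt_succ θ₁)).ne')
    exact ⟨hδ₁.2.1, hδ₁.2.2, isClubIn_of_sSup_eq (he_closed δ hδ₂).1 (he_closed δ hδ₂).2.1 hsup⟩
  have : Nonempty θ₁.out := mk_ne_zero_iff.1 ((mk_out θ₁).symm ▸ (aleph0_pos.trans hθ₁).ne')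
  obtain ⟨t, ht⟩ := exists_forall_isStationaryIn_of_guessing
    (by rw [hμ]; exact (hlam.trans_lt (lt_succ lam)).ne')
    (by rw [hμ]; exact mk_ulamIndex_lt_succ hθ₁.le hlamθ₁.le hcont) hguess
    (fun δ hδ => ⟨Ordinal.isSuccLimit_of_aleph0_lt_cof ((hG δ hδ).1 ▸ hθ₁'), (hG δ hδ).2.2⟩)
    (Q := fun t δ E => ∀ n, IsStationaryIn (E ∩ Iio δ ∩
      {α | α ∈ Sstar ∩ S₂ ∧ ulamColouring _ _ t (otp (e α)) = n}) δ)
    (fun t δ E E' hEE' h n => (h n).mono fun α hα => ⟨⟨hEE' hα.1.1, hα.1.2⟩, hα.2⟩)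
    fun δ hδ => by
      obtain ⟨hcof, hstat, hC⟩ := hG δ hδ
      exact SplitsStationary.exists_forall_isStationaryIn_of_coherent
        (by rw [hC.otp_eq_ord_succ hcof (he_closed δ hδ.2).2.2]
            exact splitsStationary_ulamColouring_succ hθ₁.le)
        (hcof ▸ hθ₁'.ne') hC hstat (he_coh δ hδ.2)
  exact ⟨fun α => ulamColouring _ _ t (otp (e α)), ht⟩

/-- Claim 1.2: existence of the colouring g : S' → ω. -/
theorem stmt_2
    (lam θ₁ θ : Cardinal.{0})
    (hlamreg : lam.IsRegular) (hlamθ₁ : Order.succ θ₁ < lam) (hθ₁θ : θ ≤ θ₁)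
    (hθreg : θ.IsRegular) (hθ : Cardinal.aleph 1 < θ)
    (Sstar S₁ S₂ S' : Set Ordinal) (e : Ordinal → Set Ordinal)
    (hSsub : Sstar ⊆ cofSet θ (Order.succ lam).ord)
    (hSstat : IsStationaryIn Sstar (Order.succ lam).ord)
    (hS₁def : S₁ = {δ | δ < (Order.succ lam).ord ∧ δ.cof = Order.succ θ₁ ∧
      IsStationaryIn (Sstar ∩ Set.Iio δ) δ})
    (hS₁stat : IsStationaryIn S₁ (Order.succ lam).ord)
    (hS₂ : ∀ δ ∈ S₂, δ < (Order.succ lam).ord ∧ Order.IsSuccLimit δ ∧ δ.cof ≤ Order.succ θ₁)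
    (he_closed : ∀ δ ∈ S₂, e δ ⊆ Set.Iio δ ∧ IsClosedIn (e δ) δ ∧
      otp (e δ) ≤ (Order.succ θ₁).ord)
    (he_coh : ∀ δ ∈ S₂, ∀ β ∈ e δ, β ∈ S₂ ∧ e β = e δ ∩ Set.Iio β)
    (he_sup : ∀ δ ∈ S₂, δ.cof ≠ Cardinal.aleph 1 → sSup (e δ) = δ)
    (hS₁S₂stat : IsStationaryIn (S₁ ∩ S₂) (Order.succ lam).ord)
    (hguess : ∀ E, IsClubIn E (Order.succ lam).ord →
      IsStationaryIn {δ | δ ∈ S₁ ∩ S₂ ∧ e δ ⊆ E} (Order.succ lam).ord)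
    (hS'def : S' = Sstar ∩ S₂)
    (hcont : 2 ^ Cardinal.aleph0 ≤ lam) :
    ∃ g : Ordinal → ℕ, ∀ E, IsClubIn E (Order.succ lam).ord →
      IsStationaryIn {δ | δ ∈ S₁ ∩ S₂ ∧ e δ ⊆ E ∧
        ∀ n : ℕ, IsStationaryIn (E ∩ Set.Iio δ ∩ {α | α ∈ S' ∧ g α = n}) δ}
        (Order.succ lam).ord :=
  stmt_2_general lam θ₁ θ hlamθ₁ hθ₁θ hθ Sstar S₁ S₂ S' e hS₁def he_closed he_coh he_sup hguess
    hS'def hcont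
end
end

section
/- Let λ be a regular uncountable cardinal and ⟨c_α : α < λ⁺⟩ a sequence such that for each limit ordinal α < λ⁺, c_α is a club of α with otp(c_α) ≤ λ, and c_{γ+1} = {γ} for each γ. For each limit ordinal δ < λ⁺ define C_δ^0 = c_δ and C_δ^{n+1} = C_δ^n ∪ {α : there exists β ∈ nacc(C_δ^n) with sup(β ∩ C_δ^n) < α < β and α ∈ c_β}. Then for every limit ordinal δ < λ⁺ and every n < ω, C_δ^n is a club of δ and otp(C_δ^n) ≤ λ^{n+1} (ordinal exponentiation, with λ regarded as an initial ordinal). -/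
noncomputable section

/-!
Closedness: a supremum `σ` of points of `C^{n+1}` is either a limit of points of `C^n`, hence in
`C^n`, or the points approaching it eventually lie in a single gap `(sup (C^n ∩ β), β)` of `C^n`,
hence in `c β`, and then `σ ∈ c β` because `c β` is closed in `β`.

Order type: if `f` embeds `C^n` into `λ^{n+1}` and `h_β` embeds `c β` into `λ`, send `β ∈ C^n` to
`λ * f β + λ` and a new point `α` in the gap below `β` to `λ * f β + succ (h_β α)`. This embeds
`C^{n+1}` into `λ * λ^{n+1}`, because both `λ` and `λ^{n+1}` are limit ordinals.
-/

theorem csSup_sep_lt_eq {α : Type*} [ConditionallyCompleteLinearOrder α] {s : Set α} {a : α}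
    (hs : BddAbove s) (ha : ∃ y ∈ s, a < y) : sSup {z ∈ s | a < z} = sSup s := by
  obtain ⟨y, hy, hay⟩ := ha
  refine le_antisymm (csSup_le_csSup hs ⟨y, hy, hay⟩ fun _ hz => hz.1)
    (csSup_le ⟨y, hy⟩ fun z hz => ?_)
  have hsep : BddAbove {z ∈ s | a < z} := hs.mono fun _ hz => hz.1
  rcases le_or_gt z a with hza | haz
  · exact (hza.trans hay.le).trans (le_csSup hsep ⟨hy, hay⟩)
  · exact le_csSup hsep ⟨hz, haz⟩

theorem Ordinal.mul_add_self_lt_mul {κ a o : Ordinal} (ho : Order.IsSuccLimit o) (hκ : 0 < κ)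
    (ha : a < o) : κ * a + κ < κ * o := by
  rw [← Ordinal.mul_succ]
  exact mul_lt_mul_of_pos_left (ho.succ_lt ha) hκ

theorem Ordinal.mul_add_self_le_mul {κ a b : Ordinal} (hab : a < b) : κ * a + κ ≤ κ * b := by
  rw [← Ordinal.mul_succ]
  exact mul_le_mul_right (Order.succ_le_of_lt hab) _

def EmbedsIn (A : Set Ordinal.{0}) (o : Ordinal.{0}) : Prop :=
  ∃ f : Ordinal → Ordinal, StrictMonoOn f A ∧ Set.MapsTo f A (Set.Iio o)

theorem otp_le_iff_embedsIn {C : Set Ordinal.{0}} (hC : Small.{0} C) {o : Ordinal.{0}} :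
    otp C ≤ o ↔ EmbedsIn C o := by
  classical
  let g : Shrink C → Ordinal := fun x => ((equivShrink C).symm x : Ordinal)
  have hg : Function.Injective g := fun a b hab =>
    (equivShrink C).symm.injective (Subtype.coe_injective hab)
  let r : Shrink C → Shrink C → Prop := fun x y => g x < g y
  have : IsWellOrder (Shrink C) r := RelEmbedding.isWellOrder (⟨⟨g, hg⟩, Iff.rfl⟩ : r ↪r (· < ·))
  have hotp : otp C = Ordinal.type r := by rw [otp, dif_pos hC]
  conv_lhs => rw [hotp, ← Ordinal.type_toType o]
  rw [Ordinal.type_le_iff']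
  constructor
  · rintro ⟨e⟩
    refine ⟨fun x => if hx : x ∈ C then
      ((Ordinal.ToType.mk (o := o)).symm (e (equivShrink C ⟨x, hx⟩)) : Ordinal) else 0, ?_, ?_⟩
    · intro x hx y hy hxy
      simp only [dif_pos hx, dif_pos hy, Subtype.coe_lt_coe, OrderIso.lt_iff_lt]
      exact e.map_rel_iff.2 (by simpa [r, g] using hxy)
    · intro x hx
      simp only [dif_pos hx]
      exact ((Ordinal.ToType.mk (o := o)).symm _).2
  · rintro ⟨f, hf, hfo⟩
    refine ⟨RelEmbedding.ofMonotone
      (fun z => Ordinal.ToType.mk ⟨f (g z), hfo ((equivShrink C).symm z).2⟩) fun a b hab => ?_⟩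
    rw [(Ordinal.ToType.mk (o := o)).lt_iff_lt, Subtype.mk_lt_mk]
    exact hf ((equivShrink C).symm a).2 ((equivShrink C).symm b).2 hab

theorem embedsIn_singleton {o : Ordinal} (ho : 0 < o) (γ : Ordinal) : EmbedsIn {γ} o :=
  ⟨fun _ => 0, Set.subsingleton_singleton.strictMonoOn _, fun _ _ => ho⟩

theorem isClosedIn_singleton (γ δ : Ordinal) : IsClosedIn {γ} δ := by
  intro s hs hne _
  rw [(Set.subset_singleton_iff_eq.1 hs).resolve_left hne.ne_empty, csSup_singleton]
  rfl

/-- `C_δ^{n+1} = C_δ^n ∪ gapFill c C_δ^n`. -/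
def gapFill (e : Ordinal → Set Ordinal) (D : Set Ordinal) : Set Ordinal :=
  {α | ∃ β ∈ naccSet D, sSup (D ∩ Set.Iio β) < α ∧ α < β ∧ α ∈ e β}

theorem le_of_sSup_inter_Iio_lt {D : Set Ordinal} {β x z : Ordinal} (hx : sSup (D ∩ Set.Iio β) < x)
    (hz : z ∈ D) (hxz : x ≤ z) : β ≤ z :=
  not_lt.1 fun hzβ =>
    (le_csSup (bddAbove_Iio.mono Set.inter_subset_right) ⟨hz, hzβ⟩).not_gt (hx.trans_le hxz)

theorem eq_of_sSup_inter_Iio_lt {D : Set Ordinal} {β β' y z : Ordinal} (hβ : β ∈ D) (hβ' : β' ∈ D)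
    (hy : sSup (D ∩ Set.Iio β) < y) (hz : sSup (D ∩ Set.Iio β') < z) (hyβ' : y < β')
    (hzβ : z < β) : β = β' :=
  le_antisymm (le_of_sSup_inter_Iio_lt hy hβ' hyβ'.le) (le_of_sSup_inter_Iio_lt hz hβ hzβ.le)

theorem union_gapFill_subset_Iio {D : Set Ordinal} {δ : Ordinal} {e : Ordinal → Set Ordinal}
    (hD : D ⊆ Set.Iio δ) : D ∪ gapFill e D ⊆ Set.Iio δ := by
  rintro x (hx | ⟨β, hβ, -, hxβ, -⟩)
  exacts [hD hx, hxβ.trans (hD hβ.1)]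

theorem IsClosedIn.union_gapFill {D : Set Ordinal} {δ : Ordinal} {e : Ordinal → Set Ordinal}
    (hDδ : D ⊆ Set.Iio δ) (hD : IsClosedIn D δ) (he : ∀ β ∈ D, IsClosedIn (e β) β) :
    IsClosedIn (D ∪ gapFill e D) δ := by
  intro s hs hne hlt
  by_cases hσs : sSup s ∈ s
  · exact hs hσs
  have hbdd : BddAbove s := ⟨δ, fun z hz => (union_gapFill_subset_Iio hDδ (hs hz)).le⟩
  have hlts : ∀ z ∈ s, z < sSup s := fun z hz =>
    (le_csSup hbdd hz).lt_of_ne fun h => hσs (h ▸ hz)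
  by_cases hcof : ∀ w < sSup s, ∃ z ∈ D, w < z ∧ z < sSup s
  · -- `D` is cofinal in `sSup s`, so `sSup s` is a limit point of `D`
    obtain ⟨z, hz⟩ := hne
    obtain ⟨u, huD, -, huσ⟩ := hcof z (hlts z hz)
    have hDσ : sSup (D ∩ Set.Iio (sSup s)) = sSup s := by
      refine le_antisymm (csSup_le ⟨u, huD, huσ⟩ fun _ hy => hy.2.le) (not_lt.1 fun h => ?_)
      obtain ⟨v, hvD, hv, hvσ⟩ := hcof _ h
      exact (le_csSup (bddAbove_Iio.mono Set.inter_subset_right) ⟨hvD, hvσ⟩).not_gt hv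
    exact Or.inl (hDσ ▸ hD _ Set.inter_subset_left ⟨u, huD, huσ⟩ (hDσ.symm ▸ hlt))
  -- otherwise the tail of `s` lies in a single gap of `D`, below some `β ∈ D`
  push Not at hcof
  obtain ⟨x₀, hx₀, hgap⟩ := hcof
  have htail : ∀ z ∈ s, x₀ < z → z ∈ gapFill e D := fun z hz hx₀z =>
    (hs hz).resolve_left fun hzD => (hgap z hzD hx₀z).not_gt (hlts z hz)
  obtain ⟨y, hys, hx₀y⟩ := exists_lt_of_lt_csSup hne hx₀
  obtain ⟨β, hβ, hDβy, hyβ, -⟩ := htail y hys hx₀y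
  rcases (hgap β hβ.1 (hx₀y.trans hyβ)).eq_or_lt with hσβ | hσβ
  · exact Or.inl (hσβ ▸ hβ.1)
  have hte : ∀ z ∈ s, x₀ < z → z ∈ e β := by
    intro z hz hx₀z
    obtain ⟨β', hβ', hDβ'z, hzβ', hzeβ'⟩ := htail z hz hx₀z
    have hσβ' := hgap β' hβ'.1 (hx₀z.trans hzβ')
    rwa [eq_of_sSup_inter_Iio_lt hβ.1 hβ'.1 hDβy hDβ'z ((hlts y hys).trans_le hσβ')
      ((hlts z hz).trans hσβ)]
  have htail_sup := csSup_sep_lt_eq hbdd ⟨y, hys, hx₀y⟩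
  have hσe : sSup s ∈ e β := htail_sup ▸
    he β hβ.1 _ (fun z hz => hte z hz.1 hz.2) ⟨y, hys, hx₀y⟩ (htail_sup ▸ hσβ)
  exact Or.inr ⟨β, hβ, hDβy.trans (hlts y hys), hσβ, hσe⟩

theorem IsClubIn.union_gapFill {D : Set Ordinal} {δ : Ordinal} {e : Ordinal → Set Ordinal}
    (hD : IsClubIn D δ) (he : ∀ β ∈ D, IsClosedIn (e β) β) :
    IsClubIn (D ∪ gapFill e D) δ :=
  ⟨union_gapFill_subset_Iio hD.1,
    fun β hβ => (hD.2.1 β hβ).imp fun _ ⟨hγ, hβγ⟩ => ⟨Or.inl hγ, hβγ⟩,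
    hD.2.2.union_gapFill hD.1 he⟩

theorem EmbedsIn.union_gapFill {D : Set Ordinal} {κ o : Ordinal} {e : Ordinal → Set Ordinal}
    (hκ : Order.IsSuccLimit κ) (ho : Order.IsSuccLimit o) (hD : EmbedsIn D o)
    (he : ∀ β ∈ D, 0 < β → EmbedsIn (e β) κ) :
    EmbedsIn (D ∪ gapFill e D) (κ * o) := by
  classical
  obtain ⟨f, hf, hfo⟩ := hD
  choose! h hh using fun β hβ hβ0 => (he β hβ hβ0 : ∃ h, _)
  choose! W hW using fun x (hx : x ∈ gapFill e D) => hx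
  let F : Ordinal → Ordinal := fun x =>
    if x ∈ gapFill e D then κ * f (W x) + Order.succ (h (W x) x) else κ * f x + κ
  have hWD : ∀ x ∈ gapFill e D, W x ∈ D ∧ 0 < W x := fun x hx =>
    ⟨(hW x hx).1.1, (hW x hx).2.2.1.trans_le' zero_le⟩
  have hFG : ∀ x ∈ gapFill e D, κ * f (W x) < F x ∧ F x < κ * f (W x) + κ := by
    intro x hx
    have hhx := (hh _ (hWD x hx).1 (hWD x hx).2).2 (hW x hx).2.2.2
    simp only [F, if_pos hx]
    exact ⟨lt_add_of_pos_right _ (zero_le.trans_lt (Order.lt_succ _)),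
      add_lt_add_right (hκ.succ_lt hhx) _⟩
  have hFD : ∀ x ∈ D, F x = κ * f x + κ := fun x hx => if_neg fun ⟨_, _, hβ, hxβ, _⟩ =>
    (le_of_sSup_inter_Iio_lt hβ hx le_rfl).not_gt hxβ
  have hWle : ∀ x ∈ gapFill e D, ∀ y ∈ D, x < y → W x ≤ y := fun x hx y hy hxy =>
    le_of_sSup_inter_Iio_lt (hW x hx).2.1 hy hxy.le
  refine ⟨F, ?_, ?_⟩
  · rintro x (hxD | hxG) y (hyD | hyG) hxy
    · rw [hFD x hxD, hFD y hyD]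
      exact (Ordinal.mul_add_self_le_mul (hf hxD hyD hxy)).trans_lt (lt_add_of_pos_right _ hκ.pos)
    · rw [hFD x hxD]
      have hxWy := hf hxD (hWD y hyG).1 (hxy.trans (hW y hyG).2.2.1)
      exact (Ordinal.mul_add_self_le_mul hxWy).trans_lt (hFG y hyG).1
    · rw [hFD y hyD]
      refine (hFG x hxG).2.trans_le (add_le_add_left ?_ _)
      exact mul_le_mul_right (hf.monotoneOn (hWD x hxG).1 hyD (hWle x hxG y hyD hxy)) _
    · rcases (hWle x hxG (W y) (hWD y hyG).1 (hxy.trans (hW y hyG).2.2.1)).lt_or_eq with hlt | heq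
      · have hWxy := hf (hWD x hxG).1 (hWD y hyG).1 hlt
        exact (hFG x hxG).2.trans_le ((Ordinal.mul_add_self_le_mul hWxy).trans (hFG y hyG).1.le)
      · simp only [F, if_pos hxG, if_pos hyG, heq]
        refine add_lt_add_right (Order.succ_lt_succ ?_) _
        exact (hh _ (hWD y hyG).1 (hWD y hyG).2).1 (heq ▸ (hW x hxG).2.2.2) (hW y hyG).2.2.2 hxy
  · rintro x (hxD | hxG)
    · exact (hFD x hxD).trans_lt (Ordinal.mul_add_self_lt_mul ho hκ.pos (hfo hxD))
    · exact (hFG x hxG).2.trans (Ordinal.mul_add_self_lt_mul ho hκ.pos (hfo (hWD x hxG).1))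

theorem isClosedIn_and_embedsIn_of_ladder {c : Ordinal → Set Ordinal} {κ ν : Ordinal}
    (hκ : 0 < κ) (hc : ∀ α < ν, Order.IsSuccLimit α → IsClubIn (c α) α ∧ otp (c α) ≤ κ)
    (hcsucc : ∀ γ : Ordinal, c (γ + 1) = {γ}) {β : Ordinal} (hβ : β < ν) :
    IsClosedIn (c β) β ∧ (0 < β → EmbedsIn (c β) κ) := by
  rcases Ordinal.zero_or_succ_or_isSuccLimit β with rfl | ⟨γ, rfl⟩ | hβlim
  · exact ⟨fun s _ _ hs => (not_lt_zero hs).elim, fun h => (lt_irrefl 0 h).elim⟩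
  · rw [Order.succ_eq_add_one, hcsucc]
    exact ⟨isClosedIn_singleton γ _, fun _ => embedsIn_singleton hκ γ⟩
  · obtain ⟨hclub, hotp⟩ := hc β hβ hβlim
    exact ⟨hclub.2.2, fun _ => (otp_le_iff_embedsIn (small_subset hclub.1)).1 hotp⟩

theorem stmt_6_general
    (lam : Cardinal.{0}) (hlamunc : Cardinal.aleph0 < lam)
    (c : Ordinal → Set Ordinal)
    (hc : ∀ α < (Order.succ lam).ord, Order.IsSuccLimit α →
      IsClubIn (c α) α ∧ otp (c α) ≤ lam.ord)
    (hcsucc : ∀ γ : Ordinal, c (γ + 1) = {γ})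
    (C : Ordinal → ℕ → Set Ordinal)
    (hC0 : ∀ δ, C δ 0 = c δ)
    (hCsucc : ∀ δ n, C δ (n + 1) = C δ n ∪
      {α | ∃ β ∈ naccSet (C δ n), sSup (C δ n ∩ Set.Iio β) < α ∧ α < β ∧ α ∈ c β})
    :
    ∀ δ < (Order.succ lam).ord, Order.IsSuccLimit δ → ∀ n : ℕ,
      IsClubIn (C δ n) δ ∧ otp (C δ n) ≤ lam.ord ^ ((n : Ordinal) + 1) := by
  intro δ hδ hδlim n
  have hκ : Order.IsSuccLimit lam.ord := Cardinal.isSuccLimit_ord hlamunc.le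
  have hladder := fun β => isClosedIn_and_embedsIn_of_ladder (β := β) hκ.pos hc hcsucc
  have key : IsClubIn (C δ n) δ ∧ EmbedsIn (C δ n) (lam.ord ^ (n + 1)) := by
    induction n with
    | zero =>
      obtain ⟨hclub, hotp⟩ := hc δ hδ hδlim
      rw [hC0, zero_add, pow_one]
      exact ⟨hclub, (otp_le_iff_embedsIn (small_subset hclub.1)).1 hotp⟩
    | succ n ih =>
      obtain ⟨hclub, hemb⟩ := ih
      have hD : ∀ β ∈ C δ n, β < (Order.succ lam).ord := fun β hβ => (hclub.1 hβ).trans hδ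
      have hlim : Order.IsSuccLimit (lam.ord ^ (n + 1)) := by
        rw [pow_succ]
        exact Ordinal.isSuccLimit_mul_right (pow_pos hκ.pos n) hκ
      rw [show C δ (n + 1) = C δ n ∪ gapFill c (C δ n) from hCsucc δ n, pow_succ']
      exact ⟨hclub.union_gapFill fun β hβ => (hladder β (hD β hβ)).1,
        hemb.union_gapFill hκ hlim fun β hβ => (hladder β (hD β hβ)).2⟩
  refine ⟨key.1, (otp_le_iff_embedsIn (small_subset key.1.1)).2 ?_⟩
  rw [← Nat.cast_add_one, Ordinal.opow_natCast]
  exact key.2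

/-- Note 1.6(1): each C_δ^n is a club of δ of order type at most λ^{n+1}. -/
theorem stmt_6
    (lam : Cardinal.{0}) (hlamreg : lam.IsRegular) (hlamunc : Cardinal.aleph0 < lam)
    (c : Ordinal → Set Ordinal)
    (hc : ∀ α < (Order.succ lam).ord, Order.IsSuccLimit α →
      IsClubIn (c α) α ∧ otp (c α) ≤ lam.ord)
    (hcsucc : ∀ γ : Ordinal, c (γ + 1) = {γ})
    (C : Ordinal → ℕ → Set Ordinal)
    (hC0 : ∀ δ, C δ 0 = c δ)
    (hCsucc : ∀ δ n, C δ (n + 1) = C δ n ∪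
      {α | ∃ β ∈ naccSet (C δ n), sSup (C δ n ∩ Set.Iio β) < α ∧ α < β ∧ α ∈ c β})
    :
    ∀ δ < (Order.succ lam).ord, Order.IsSuccLimit δ → ∀ n : ℕ,
      IsClubIn (C δ n) δ ∧ otp (C δ n) ≤ lam.ord ^ ((n : Ordinal) + 1) :=
  stmt_6_general lam hlamunc c hc hcsucc C hC0 hCsucc
end
end

section
/- Let λ be a regular uncountable cardinal and ⟨c_α : α < λ⁺⟩ a sequence such that for each limit ordinal α < λ⁺, c_α is a club of α with otp(c_α) ≤ λ, and c_{γ+1} = {γ} for each γ. For each limit ordinal δ < λ⁺ define C_δ^0 = c_δ and C_δ^{n+1} = C_δ^n ∪ {α : there exists β ∈ nacc(C_δ^n) with sup(β ∩ C_δ^n) < α < β and α ∈ c_β}. Then for every limit ordinal δ < λ⁺ and every α < δ with cf(α) = λ, there exists n < ω such that α ∈ nacc(C_δ^n); equivalently, S_λ^δ = ⋃_{n<ω} (nacc(C_δ^n) ∩ S_λ^δ). -/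
/-!
`C_δ^{n+1}` arises from `C_δ^n` by filling every gap `(sup (C_δ^n ∩ β), β)` below a
non-accumulation point `β` with the points of `c_β` lying in it. Filling gaps keeps a club a club:
a limit of new points eventually lies in a single gap, so it is a limit of a single `c_β`, which
is closed.

If `α` of cofinality `λ` lay in no `C_δ^n`, the least point of `C_δ^n` above `α` would be a
non-accumulation point whose gap contains `α`, and `c_β` would supply a smaller point of
`C_δ^{n+1}` above `α`: an infinite descending sequence of ordinals. At the first stage where `α`
appears it is not an accumulation point, for otherwise it would be one of `c_δ` (at stage `0`) or
of the `c_β` whose gap it fills, while `otp (c_β) ≤ λ = cf α`.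
-/

noncomputable section

open Set Cardinal

def shrinkLT (D : Set Ordinal.{0}) [Small.{0} D] (x y : Shrink D) : Prop :=
  ((equivShrink D).symm x : Ordinal) < (equivShrink D).symm y

instance (D : Set Ordinal.{0}) [Small.{0} D] : IsWellOrder (Shrink D) (shrinkLT D) :=
  RelEmbedding.isWellOrder
    ⟨(equivShrink D).symm.toEmbedding.trans (Function.Embedding.subtype _), Iff.rfl⟩

theorem otp_eq_type (D : Set Ordinal.{0}) [h : Small.{0} D] :
    otp D = Ordinal.type (shrinkLT D) := by
  rw [otp, dif_pos h]
  rfl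

theorem notMem_accSet_of_otp_le {D : Set Ordinal.{0}} [Small.{0} D] {κ : Cardinal.{0}}
    {α : Ordinal.{0}} (hD : otp D ≤ κ.ord) (hcof : α.cof = κ) : α ∉ accSet D := by
  rintro ⟨hα, hacc⟩
  set a := equivShrink D ⟨α, hα⟩
  let g : {y // shrinkLT D y a} → Ordinal := fun y => (equivShrink D).symm y.1
  -- the points of `D` below `α` are indexed by a proper initial segment of `otp D ≤ κ = cf α`
  have hcard : #{y // shrinkLT D y a} < α.cof := by
    rw [hcof]
    exact lt_ord.1 ((Ordinal.typein_lt_type _ a).trans_le (otp_eq_type D ▸ hD))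
  have hg : ∀ y, g y < α := fun y => by simpa [shrinkLT, a] using y.2
  have hle : sSup (D ∩ Iio α) ≤ ⨆ y, g y := by
    refine csSup_le' fun x ⟨hxD, hxα⟩ => ?_
    refine le_ciSup_of_le Ordinal.bddAbove_of_small
      ⟨equivShrink D ⟨x, hxD⟩, by simpa [shrinkLT, a] using hxα⟩ ?_
    simp [g]
  exact (hacc.trans_le hle).not_gt (Ordinal.iSup_lt_of_lt_cof hcard hg)

/-- The passage from `C_δ^n` to `C_δ^{n+1}`. -/
def fillGaps (c : Ordinal.{0} → Set Ordinal.{0}) (D : Set Ordinal.{0}) : Set Ordinal.{0} :=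
  D ∪ {α | ∃ β ∈ naccSet D, sSup (D ∩ Iio β) < α ∧ α < β ∧ α ∈ c β}

section

variable {c : Ordinal.{0} → Set Ordinal.{0}} {D s : Set Ordinal.{0}} {δ α β σ x : Ordinal.{0}}

theorem le_sSup_inter_Iio (hβ : β ∈ D) (hβα : β < α) : β ≤ sSup (D ∩ Iio α) :=
  le_csSup (bddAbove_Iio.mono inter_subset_right) ⟨hβ, hβα⟩

theorem mem_naccSet_of_sSup_lt (hβ : β ∈ D) (h : sSup (D ∩ Iio β) < β) : β ∈ naccSet D :=
  ⟨hβ, fun hacc => h.ne' hacc.2⟩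

theorem IsClosedIn.mem_of_sSup_inter_Iio_eq (hD : IsClosedIn D δ) (hσ0 : σ ≠ 0) (hσδ : σ < δ)
    (h : sSup (D ∩ Iio σ) = σ) : σ ∈ D := by
  have hne : (D ∩ Iio σ).Nonempty := by
    refine nonempty_iff_ne_empty.2 fun he => hσ0 ?_
    rw [← h, he, csSup_empty, Ordinal.bot_eq_zero]
  simpa only [h] using hD _ inter_subset_left hne (h.trans_lt hσδ)

theorem IsClosedIn.sSup_inter_Iio_lt (hD : IsClosedIn D δ) (hα0 : α ≠ 0) (hαδ : α < δ)
    (hα : α ∉ D) : sSup (D ∩ Iio α) < α :=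
  (csSup_le' fun _ hx => hx.2.le).lt_of_ne fun h => hα (hD.mem_of_sSup_inter_Iio_eq hα0 hαδ h)

theorem subset_fillGaps : D ⊆ fillGaps c D := subset_union_left

theorem mem_of_mem_fillGaps (hβ : β ∈ D) (hx : x ∈ fillGaps c D)
    (hgap : sSup (D ∩ Iio β) < x) (hxβ : x < β) : x ∈ c β := by
  rcases hx with hxD | ⟨β', hβ', hgap', hxβ', hxc⟩
  · exact absurd (le_sSup_inter_Iio hxD hxβ) hgap.not_ge
  rcases lt_trichotomy β' β with h | rfl | h
  · exact absurd ((le_sSup_inter_Iio hβ'.1 h).trans_lt hgap) hxβ'.not_gt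
  · exact hxc
  · exact absurd ((le_sSup_inter_Iio hβ h).trans_lt hgap') hxβ.not_gt

theorem exists_gap_of_sSup_eq (hs : s ⊆ fillGaps c D) (hsσ : s ⊆ Iio σ) (hsup : sSup s = σ)
    (hσD : σ ∉ D) (hDσ : sSup (D ∩ Iio σ) < σ) :
    ∃ β ∈ D, sSup (D ∩ Iio β) < σ ∧ σ < β ∧ sSup (c β ∩ Iio σ) = σ := by
  obtain ⟨x₀, hx₀s, hx₀⟩ := exists_lt_of_lt_csSup' (hDσ.trans_eq hsup.symm)
  have hx₀σ : x₀ < σ := hsσ hx₀s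
  obtain ⟨β, hβ, hgap, hx₀β, -⟩ :
      ∃ β ∈ naccSet D, sSup (D ∩ Iio β) < x₀ ∧ x₀ < β ∧ x₀ ∈ c β := by
    refine (hs hx₀s).resolve_left fun hx₀D => ?_
    exact (le_sSup_inter_Iio hx₀D hx₀σ).not_gt hx₀
  have hσβ : σ < β := by
    refine lt_of_le_of_ne (not_lt.1 fun hβσ => ?_) fun h => hσD (h ▸ hβ.1)
    exact ((le_sSup_inter_Iio hβ.1 hβσ).trans_lt hx₀).not_gt hx₀β
  refine ⟨β, hβ.1, hgap.trans hx₀σ, hσβ, le_antisymm (csSup_le' fun _ hy => hy.2.le) ?_⟩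
  refine le_of_forall_lt fun ζ hζ => ?_
  obtain ⟨y, hys, hy⟩ := exists_lt_of_lt_csSup' ((max_lt hζ hx₀σ).trans_eq hsup.symm)
  have hyσ : y < σ := hsσ hys
  have hyc : y ∈ c β :=
    mem_of_mem_fillGaps hβ.1 (hs hys) (hgap.trans ((le_max_right _ _).trans_lt hy))
      (hyσ.trans hσβ)
  exact ((le_max_left _ _).trans_lt hy).trans_le (le_sSup_inter_Iio hyc hyσ)

theorem isSuccLimit_of_sSup_inter_Iio_eq (hcsucc : ∀ γ, c (γ + 1) = {γ}) (hσ0 : σ ≠ 0)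
    (hσβ : σ < β) (h : sSup (c β ∩ Iio σ) = σ) : Order.IsSuccLimit β := by
  rcases Ordinal.zero_or_succ_or_isSuccLimit β with rfl | ⟨γ, rfl⟩ | hβ
  · exact (not_lt_zero hσβ).elim
  · rw [Order.succ_eq_add_one, hcsucc] at h
    have hσγ : σ ≤ γ := h ▸ csSup_le' fun _ hy => hy.1.le
    have hempty : {γ} ∩ Iio σ = ∅ := by simpa using hσγ
    rw [hempty, csSup_empty, Ordinal.bot_eq_zero] at h
    exact absurd h.symm hσ0
  · exact hβ

theorem exists_mem_Ico_of_lt (hc : ∀ β < δ, Order.IsSuccLimit β → IsClubIn (c β) β)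
    (hcsucc : ∀ γ, c (γ + 1) = {γ}) (hαβ : α < β) (hβδ : β < δ) :
    ∃ y ∈ c β, α ≤ y ∧ y < β := by
  rcases Ordinal.zero_or_succ_or_isSuccLimit β with rfl | ⟨γ, rfl⟩ | hβ
  · exact (not_lt_zero hαβ).elim
  · refine ⟨γ, ?_, Order.lt_succ_iff.1 hαβ, Order.lt_succ γ⟩
    rw [Order.succ_eq_add_one, hcsucc]
    rfl
  · obtain ⟨hsub, hunb, -⟩ := hc β hβδ hβ
    obtain ⟨y, hyc, hαy⟩ := hunb α hαβ
    exact ⟨y, hyc, hαy, hsub hyc⟩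

theorem isClubIn_fillGaps (hc : ∀ β < δ, Order.IsSuccLimit β → IsClubIn (c β) β)
    (hcsucc : ∀ γ, c (γ + 1) = {γ}) (hD : IsClubIn D δ) : IsClubIn (fillGaps c D) δ := by
  obtain ⟨hDδ, hDunb, hDcl⟩ := hD
  have hsub : fillGaps c D ⊆ Iio δ := by
    rintro x (hx | ⟨β, hβ, -, hxβ, -⟩)
    exacts [hDδ hx, hxβ.trans (hDδ hβ.1)]
  refine ⟨hsub, fun β hβ => (hDunb β hβ).imp fun γ hγ => ⟨subset_fillGaps hγ.1, hγ.2⟩, ?_⟩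
  intro s hs hsne hsδ
  set σ := sSup s
  by_cases hσs : σ ∈ s
  · exact hs hσs
  by_cases hσD : σ ∈ D
  · exact subset_fillGaps hσD
  have hsσ : s ⊆ Iio σ := fun x hx =>
    (le_csSup (bddAbove_Iio.mono (hs.trans hsub)) hx).lt_of_ne (ne_of_mem_of_not_mem hx hσs)
  have hσ0 : σ ≠ 0 := by
    obtain ⟨x, hx⟩ := hsne
    exact (pos_of_gt (hsσ hx)).ne'
  obtain ⟨β, hβD, hgap, hσβ, hsupc⟩ :=
    exists_gap_of_sSup_eq hs hsσ rfl hσD (hDcl.sSup_inter_Iio_lt hσ0 hsδ hσD)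
  have hσc : σ ∈ c β :=
    (hc β (hDδ hβD) (isSuccLimit_of_sSup_inter_Iio_eq hcsucc hσ0 hσβ hsupc)).2.2
      |>.mem_of_sSup_inter_Iio_eq hσ0 hσβ hsupc
  exact Or.inr ⟨β, mem_naccSet_of_sSup_lt hβD (hgap.trans hσβ), hgap, hσβ, hσc⟩

/-- The least point `β` of `D` above `α ∉ D` is a non-accumulation point whose gap contains
`α`, so `fillGaps c D` has a point in `[α, β)`. -/
theorem exists_mem_fillGaps_lt_sInf (hc : ∀ β < δ, Order.IsSuccLimit β → IsClubIn (c β) β)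
    (hcsucc : ∀ γ, c (γ + 1) = {γ}) (hD : IsClubIn D δ) (hα0 : α ≠ 0) (hαδ : α < δ)
    (hαD : α ∉ D) : ∃ y ∈ fillGaps c D ∩ Ici α, y < sInf (D ∩ Ici α) := by
  set β := sInf (D ∩ Ici α)
  obtain ⟨hβD, hαβ⟩ : β ∈ D ∩ Ici α := csInf_mem (hD.2.1 α hαδ)
  have hαβ : α < β := (mem_Ici.1 hαβ).lt_of_ne (ne_of_mem_of_not_mem hβD hαD).symm
  have hgap : sSup (D ∩ Iio β) < α := by
    refine (csSup_le' ?_).trans_lt (hD.2.2.sSup_inter_Iio_lt hα0 hαδ hαD)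
    rintro x ⟨hxD, hxβ⟩
    refine le_sSup_inter_Iio hxD (not_le.1 fun h => ?_)
    exact (csInf_le' (s := D ∩ Ici α) ⟨hxD, h⟩).not_gt hxβ
  obtain ⟨y, hyc, hαy, hyβ⟩ := exists_mem_Ico_of_lt hc hcsucc hαβ (hD.1 hβD)
  have hy : y ∈ fillGaps c D :=
    Or.inr ⟨β, mem_naccSet_of_sSup_lt hβD (hgap.trans hαβ), hgap.trans_le hαy, hyβ, hyc⟩
  exact ⟨y, ⟨hy, hαy⟩, hyβ⟩

theorem exists_mem_of_forall_isClubIn (hc : ∀ β < δ, Order.IsSuccLimit β → IsClubIn (c β) β)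
    (hcsucc : ∀ γ, c (γ + 1) = {γ}) {C : ℕ → Set Ordinal.{0}}
    (hC : ∀ n, C (n + 1) = fillGaps c (C n)) (hclub : ∀ n, IsClubIn (C n) δ) (hα0 : α ≠ 0)
    (hαδ : α < δ) : ∃ n, α ∈ C n := by
  by_contra! hα
  refine not_strictAnti_of_wellFoundedLT (fun n => sInf (C n ∩ Ici α))
    (strictAnti_nat_of_succ_lt fun n => ?_)
  obtain ⟨y, hy, hyβ⟩ := exists_mem_fillGaps_lt_sInf hc hcsucc (hclub n) hα0 hαδ (hα n)
  exact (csInf_le' (hC n ▸ hy)).trans_lt hyβ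

theorem notMem_accSet_fillGaps {κ : Cardinal.{0}}
    (hc : ∀ β < δ, Order.IsSuccLimit β → IsClubIn (c β) β ∧ otp (c β) ≤ κ.ord)
    (hcsucc : ∀ γ, c (γ + 1) = {γ}) (hD : IsClubIn D δ) (hα0 : α ≠ 0) (hαδ : α < δ)
    (hαD : α ∉ D) (hcof : α.cof = κ) : α ∉ accSet (fillGaps c D) := by
  rintro ⟨-, hacc⟩
  obtain ⟨β, hβD, -, hαβ, hsupc⟩ := exists_gap_of_sSup_eq inter_subset_left inter_subset_right
    hacc.symm hαD (hD.2.2.sSup_inter_Iio_lt hα0 hαδ hαD)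
  obtain ⟨hcβ, hotp⟩ := hc β (hD.1 hβD) (isSuccLimit_of_sSup_inter_Iio_eq hcsucc hα0 hαβ hsupc)
  have : Small.{0} (c β) := small_subset hcβ.1
  have hαc : α ∈ accSet (c β) :=
    mem_sep (hcβ.2.2.mem_of_sSup_inter_Iio_eq hα0 hαβ hsupc) hsupc.symm
  exact notMem_accSet_of_otp_le hotp hcof hαc

end

theorem stmt_9_general
    (lam : Cardinal.{0}) (hlamreg : lam.IsRegular)
    (c : Ordinal → Set Ordinal)
    (hc : ∀ α < (Order.succ lam).ord, Order.IsSuccLimit α →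
      IsClubIn (c α) α ∧ otp (c α) ≤ lam.ord)
    (hcsucc : ∀ γ : Ordinal, c (γ + 1) = {γ})
    (C : Ordinal → ℕ → Set Ordinal)
    (hC0 : ∀ δ, C δ 0 = c δ)
    (hCsucc : ∀ δ n, C δ (n + 1) = C δ n ∪
      {α | ∃ β ∈ naccSet (C δ n), sSup (C δ n ∩ Set.Iio β) < α ∧ α < β ∧ α ∈ c β})
    :
    ∀ δ < (Order.succ lam).ord, Order.IsSuccLimit δ →
      (∀ α < δ, α.cof = lam → ∃ n : ℕ, α ∈ naccSet (C δ n)) ∧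
      cofSet lam δ = ⋃ n : ℕ, naccSet (C δ n) ∩ cofSet lam δ := by
  intro δ hδ hδlim
  have hcδ : ∀ β < δ, Order.IsSuccLimit β → IsClubIn (c β) β ∧ otp (c β) ≤ lam.ord :=
    fun β hβ => hc β (hβ.trans hδ)
  have hclub : ∀ n, IsClubIn (C δ n) δ := by
    intro n
    induction n with
    | zero => exact hC0 δ ▸ (hc δ hδ hδlim).1
    | succ n ih => exact hCsucc δ n ▸ isClubIn_fillGaps (fun β hβ hl => (hcδ β hβ hl).1) hcsucc ih
  have hnacc : ∀ α < δ, α.cof = lam → ∃ n : ℕ, α ∈ naccSet (C δ n) := by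
    intro α hαδ hcof
    have hα0 : α ≠ 0 := by
      rintro rfl
      exact hlamreg.pos.ne (Ordinal.cof_zero ▸ hcof)
    classical
    have hex := exists_mem_of_forall_isClubIn (fun β hβ hl => (hcδ β hβ hl).1) hcsucc
      (hCsucc δ) hclub hα0 hαδ
    refine ⟨Nat.find hex, Nat.find_spec hex, ?_⟩
    cases hn : Nat.find hex with
    | zero =>
      have : Small.{0} (c δ) := small_subset (hc δ hδ hδlim).1.1
      exact hC0 δ ▸ notMem_accSet_of_otp_le (hc δ hδ hδlim).2 hcof
    | succ m =>
      exact hCsucc δ m ▸ notMem_accSet_fillGaps hcδ hcsucc (hclub m) hα0 hαδ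
        (Nat.find_min hex (hn ▸ m.lt_succ_self)) hcof
  refine ⟨hnacc, (inter_eq_right.2 fun α hα => mem_iUnion.2 ?_).symm.trans (iUnion_inter _ _)⟩
  exact hnacc α hα.1 hα.2

/-- Note 1.6(3): every point of cofinality λ below δ is a nonaccumulation point of some C_δ^n. -/
theorem stmt_9
    (lam : Cardinal.{0}) (hlamreg : lam.IsRegular) (hlamunc : Cardinal.aleph0 < lam)
    (c : Ordinal → Set Ordinal)
    (hc : ∀ α < (Order.succ lam).ord, Order.IsSuccLimit α →
      IsClubIn (c α) α ∧ otp (c α) ≤ lam.ord)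
    (hcsucc : ∀ γ : Ordinal, c (γ + 1) = {γ})
    (C : Ordinal → ℕ → Set Ordinal)
    (hC0 : ∀ δ, C δ 0 = c δ)
    (hCsucc : ∀ δ n, C δ (n + 1) = C δ n ∪
      {α | ∃ β ∈ naccSet (C δ n), sSup (C δ n ∩ Set.Iio β) < α ∧ α < β ∧ α ∈ c β})
    :
    ∀ δ < (Order.succ lam).ord, Order.IsSuccLimit δ →
      (∀ α < δ, α.cof = lam → ∃ n : ℕ, α ∈ naccSet (C δ n)) ∧
      cofSet lam δ = ⋃ n : ℕ, naccSet (C δ n) ∩ cofSet lam δ :=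
  stmt_9_general lam hlamreg c hc hcsucc C hC0 hCsucc
end
end

section
/- Let δ be a limit ordinal, e a club of δ, S ⊆ nacc(e) a set of limit ordinals, and for each α ∈ S let D_α be a club of α. Let E = e ∪ ⋃_{α ∈ S} {β ∈ D_α : β ≥ sup(e ∩ α)}. Then acc(E) ⊆ acc(e) ∪ S ∪ ⋃_{α ∈ S} acc(D_α). In particular, if every element of acc(e) ∪ S and every element of acc(D_α) for each α ∈ S has cofinality strictly less than a cardinal λ, then every element of acc(E) has cofinality strictly less than λ. -/
noncomputable section

/-!
For `α ∈ e` write `s_α = sup (e ∩ α)`. The open interval `(s_α, α)` contains no point of `e`,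
and for two points `α, α'` of `e` the interval `(s_α, α)` meets `[s_α', α')` only when
`α = α'`. Hence inside `(s_α, α)` the glued set `E` consists of points of `D α` alone, with
`α ∈ S`. An accumulation point `β` of `E` either lies in `e`, and then it is in `acc e` or
`E` accumulates to it inside the gap `(s_β, β)`, forcing `β ∈ S`; or it lies in some
`D α ∖ e`, and then closedness of `e` gives `s_α < β`, so `E` accumulates to `β` through
points of `D α`.
-/

open Set

lemma sSup_inter_Iio_le (C : Set Ordinal) (β : Ordinal) : sSup (C ∩ Iio β) ≤ β :=
  csSup_le' fun _ hx => hx.2.le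

lemma le_sSup_inter_Iio_s11 {C : Set Ordinal} {β γ : Ordinal} (hγ : γ ∈ C) (hγβ : γ < β) :
    γ ≤ sSup (C ∩ Iio β) :=
  le_csSup ⟨β, fun _ hx => hx.2.le⟩ ⟨hγ, hγβ⟩

lemma sSup_inter_Iio_mem {e : Set Ordinal} {δ α : Ordinal} (hcl : IsClosedIn e δ)
    (hαδ : α < δ) (hne : (e ∩ Iio α).Nonempty) : sSup (e ∩ Iio α) ∈ e :=
  hcl _ inter_subset_left hne ((sSup_inter_Iio_le e α).trans_lt hαδ)

lemma mem_accSet_iff {C : Set Ordinal} {β : Ordinal} :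
    β ∈ accSet C ↔ β ∈ C ∧ ∀ x < β, ∃ γ ∈ C, x < γ ∧ γ < β := by
  refine and_congr_right fun _ => ?_
  rw [le_antisymm_iff, and_iff_left (sSup_inter_Iio_le C β), ← forall_lt_iff_le]
  refine forall₂_congr fun x _ => ?_
  rw [lt_csSup_iff' ⟨β, fun _ hx => hx.2.le⟩]
  simp only [mem_inter_iff, mem_Iio, and_assoc, and_comm (a := _ < β)]

section Glue

variable {e S : Set Ordinal} {D : Ordinal → Set Ordinal}

lemma mem_of_mem_glue_of_gap (hSe : S ⊆ e) (hD : ∀ α ∈ S, D α ⊆ Iio α) {α γ : Ordinal}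
    (hα : α ∈ e) (hγ : γ ∈ e ∪ ⋃ α ∈ S, {β ∈ D α | sSup (e ∩ Iio α) ≤ β})
    (hsγ : sSup (e ∩ Iio α) < γ) (hγα : γ < α) : α ∈ S ∧ γ ∈ D α := by
  rcases hγ with hγe | hγ
  · exact absurd (le_sSup_inter_Iio_s11 hγe hγα) hsγ.not_ge
  obtain ⟨α', hα'S, hγD, hs'γ⟩ : ∃ α' ∈ S, γ ∈ D α' ∧ sSup (e ∩ Iio α') ≤ γ := by
    simpa [and_left_comm] using hγ
  have hγα' : γ < α' := hD α' hα'S hγD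
  obtain rfl : α' = α := by
    rcases lt_trichotomy α' α with h | h | h
    · exact absurd ((le_sSup_inter_Iio_s11 (hSe hα'S) h).trans_lt (hsγ.trans hγα')) (lt_irrefl _)
    · exact h
    · exact absurd ((le_sSup_inter_Iio_s11 hα h).trans_lt (hs'γ.trans_lt hγα)) (lt_irrefl _)
  exact ⟨hα'S, hγD⟩

lemma accSet_glue_subset {δ : Ordinal} (hsub : e ⊆ Iio δ) (hcl : IsClosedIn e δ)
    (hSe : S ⊆ e) (hD : ∀ α ∈ S, D α ⊆ Iio α) :
    accSet (e ∪ ⋃ α ∈ S, {β ∈ D α | sSup (e ∩ Iio α) ≤ β}) ⊆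
      accSet e ∪ S ∪ ⋃ α ∈ S, accSet (D α) := by
  intro β hβ
  obtain ⟨hβE, hβlim⟩ := mem_accSet_iff.1 hβ
  by_cases hβe : β ∈ e
  · by_cases hacc : β ∈ accSet e
    · exact .inl (.inl hacc)
    have hsβ : sSup (e ∩ Iio β) < β :=
      (sSup_inter_Iio_le e β).lt_of_ne fun h => hacc ⟨hβe, h.symm⟩
    obtain ⟨γ, hγE, hsγ, hγβ⟩ := hβlim _ hsβ
    exact .inl (.inr (mem_of_mem_glue_of_gap hSe hD hβe hγE hsγ hγβ).1)
  obtain ⟨α, hαS, hβD, hsβ⟩ : ∃ α ∈ S, β ∈ D α ∧ sSup (e ∩ Iio α) ≤ β := by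
    simpa [hβe, and_left_comm] using hβE
  refine .inr (mem_biUnion hαS (mem_accSet_iff.2 ⟨hβD, fun x hx => ?_⟩))
  have hsβ : sSup (e ∩ Iio α) < β := by
    refine hsβ.lt_of_ne fun hs => hβe (hs ▸ sSup_inter_Iio_mem hcl (hsub (hSe hαS)) ?_)
    refine nonempty_iff_ne_empty.2 fun h => ?_
    rw [h, csSup_empty] at hs
    exact not_lt_bot (hs ▸ hx)
  obtain ⟨γ, hγE, hγ, hγβ⟩ := hβlim _ (max_lt hx hsβ)
  rw [max_lt_iff] at hγ
  exact ⟨γ, (mem_of_mem_glue_of_gap hSe hD (hSe hαS) hγE hγ.2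
    (hγβ.trans (hD α hαS hβD))).2, hγ.1, hγβ⟩

end Glue

theorem stmt_11_general (δ : Ordinal)
    (e : Set Ordinal) (he : IsClubIn e δ)
    (S : Set Ordinal) (hSe : S ⊆ naccSet e)
    (D : Ordinal → Set Ordinal) (hD : ∀ α ∈ S, IsClubIn (D α) α)
    (E : Set Ordinal)
    (hE : E = e ∪ ⋃ α ∈ S, {β ∈ D α | sSup (e ∩ Set.Iio α) ≤ β}) :
    (accSet E ⊆ accSet e ∪ S ∪ ⋃ α ∈ S, accSet (D α)) ∧
      ∀ lam : Cardinal,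
        (∀ x ∈ accSet e ∪ S, x.cof < lam) →
        (∀ α ∈ S, ∀ x ∈ accSet (D α), x.cof < lam) →
        ∀ x ∈ accSet E, x.cof < lam := by
  subst hE
  have hacc := accSet_glue_subset he.1 he.2.2 (fun α h => (hSe h).1) fun α h => (hD α h).1
  refine ⟨hacc, fun lam hcof hcofD x hx => ?_⟩
  rcases hacc hx with (h | h) | h
  · exact hcof x (.inl h)
  · exact hcof x (.inr h)
  · obtain ⟨α, hαS, hxD⟩ := mem_iUnion₂.1 h
    exact hcofD α hαS x hxD

/-- Accumulation points of the glued club come from acc(e), S, or the acc(D_α). -/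
theorem stmt_11 (δ : Ordinal) (hδ : Order.IsSuccLimit δ)
    (e : Set Ordinal) (he : IsClubIn e δ)
    (S : Set Ordinal) (hSe : S ⊆ naccSet e) (hSlim : ∀ α ∈ S, Order.IsSuccLimit α)
    (D : Ordinal → Set Ordinal) (hD : ∀ α ∈ S, IsClubIn (D α) α)
    (E : Set Ordinal)
    (hE : E = e ∪ ⋃ α ∈ S, {β ∈ D α | sSup (e ∩ Set.Iio α) ≤ β}) :
    (accSet E ⊆ accSet e ∪ S ∪ ⋃ α ∈ S, accSet (D α)) ∧
      ∀ lam : Cardinal,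
        (∀ x ∈ accSet e ∪ S, x.cof < lam) →
        (∀ α ∈ S, ∀ x ∈ accSet (D α), x.cof < lam) →
        ∀ x ∈ accSet E, x.cof < lam :=
  stmt_11_general δ e he S hSe D hD E hE
end
end

section
/- Let λ be a cardinal and ⟨λ_ζ : ζ < ω⟩ a strictly increasing sequence of infinite cardinals with supremum λ. Let μ be a cardinal and ⟨A_α : α < μ⟩ a family of subsets of λ⁺ such that |A_α ∩ A_β| < λ whenever α ≠ β. Let a be a countable set and ⟨b_i : i ∈ a⟩ a family of subsets of λ⁺. For α < μ let S_α = {ζ < ω : there exists i ∈ a with b_i ⊆ A_α and |b_i| = λ_ζ}. Then the set {α < μ : S_α is infinite} has cardinality at most 2^ℵ₀. -/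
noncomputable section

/-- The key counting step in Theorem 2.1: for an almost disjoint family
`⟨A_α : α < μ⟩` and a countable family `⟨b_i : i ∈ a⟩`, at most `2^ℵ₀` many `α`
have `b_i ⊆ A_α` for `i ∈ a` with `|b_i|` of unboundedly many sizes `λ_ζ`. -/
theorem stmt_14 (lam : Cardinal.{0}) (lamseq : ℕ → Cardinal.{0})
    (hmono : StrictMono lamseq) (hinf : ∀ ζ : ℕ, Cardinal.aleph0 ≤ lamseq ζ)
    (hsup : (⨆ ζ : ℕ, lamseq ζ) = lam)
    (μ : Cardinal.{0}) (A : Ordinal → Set Ordinal)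
    (hAsub : ∀ α < μ.ord, A α ⊆ Set.Iio (Order.succ lam).ord)
    (hAdisj : ∀ α < μ.ord, ∀ β < μ.ord, α ≠ β →
      Cardinal.mk ↥(A α ∩ A β) < Cardinal.lift.{1,0} lam)
    (a : Set Ordinal) (ha : a.Countable)
    (b : Ordinal → Set Ordinal)
    (hb : ∀ i ∈ a, b i ⊆ Set.Iio (Order.succ lam).ord) :
    Cardinal.mk ↥{α | α < μ.ord ∧
        {ζ : ℕ | ∃ i ∈ a, b i ⊆ A α ∧
          Cardinal.mk ↥(b i) = Cardinal.lift.{1,0} (lamseq ζ)}.Infinite} ≤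
      Cardinal.lift.{1,0} (2 ^ Cardinal.aleph0) := by
  classical
  set S := {α | α < μ.ord ∧
      {ζ : ℕ | ∃ i ∈ a, b i ⊆ A α ∧
        Cardinal.mk ↥(b i) = Cardinal.lift.{1,0} (lamseq ζ)}.Infinite} with hSdef
  have : Countable ↥a := ha.to_subtype
  obtain ⟨e, he⟩ := Countable.exists_injective_nat ↥a
  set f : ↥S → Set ℕ := fun α => {n | ∃ i : ↥a, e i = n ∧ b (i : _) ⊆ A α} with hf
  have key : Function.Injective f := by
    rintro ⟨α, hα⟩ ⟨β, hβ⟩ h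
    simp only [hf] at h
    ext1
    by_contra hne
    have hdisj := hAdisj α hα.1 β hβ.1 hne
    have hls : Cardinal.lift.{1,0} lam = ⨆ ζ, Cardinal.lift.{1,0} (lamseq ζ) := by
      rw [← hsup, Cardinal.lift_iSup (Cardinal.bddAbove_range _)]
    rw [hls] at hdisj
    obtain ⟨ζ₀, hζ₀⟩ : ∃ ζ₀, Cardinal.mk ↥(A α ∩ A β) < Cardinal.lift.{1,0} (lamseq ζ₀) :=
      (lt_ciSup_iff (Cardinal.bddAbove_range _)).mp hdisj
    obtain ⟨ζ, hζS, hζ⟩ := hα.2.exists_gt ζ₀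
    obtain ⟨i, hia, hib, hmk⟩ := hζS
    have hiβ : b i ⊆ A β := by
      have hmem : e ⟨i, hia⟩ ∈ {n | ∃ i : ↥a, e i = n ∧ b (i : _) ⊆ A α} :=
        ⟨⟨i, hia⟩, rfl, hib⟩
      rw [h] at hmem
      obtain ⟨j, hj, hjb⟩ := hmem
      rwa [he hj] at hjb
    have hle : Cardinal.mk ↥(b i) ≤ Cardinal.mk ↥(A α ∩ A β) :=
      Cardinal.mk_le_mk_of_subset (fun x hx => ⟨hib hx, hiβ hx⟩)
    rw [hmk] at hle
    have hlt := hle.trans_lt hζ₀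
    exact absurd (Cardinal.lift_le.mpr (hmono.monotone hζ.le)) (not_le.mpr hlt)
  have h1 : Cardinal.lift.{0,1} (Cardinal.mk ↥S) ≤ Cardinal.lift.{1,0} (Cardinal.mk (Set ℕ)) :=
    Cardinal.lift_mk_le'.mpr ⟨⟨f, key⟩⟩
  simpa [Cardinal.mk_set, Cardinal.mk_nat] using h1
end
end
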